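/- arXiv:2312.10887 — 5 statements merged into one kernel-verified Lean document; each statement's English description precedes it below -/
import Mathlib

section
/- If a sequence of T time steps transforms the start configuration into the goal configuration of a GSTP instance on an m1 × m2 grid with k escorts, then T ≥ S / (k · max(m1, m2)), where S is the sum of Manhattan distances between each tile's start position and its goal position. -/
/-!
A moving tile pushes a chain of tiles ahead of it: the corner-following rule makes the pushed
tile move parallel to the pusher, and the no-swap rule makes it move the same way. The chain
ends with a tile entering an escort on the same row or column. Since at most one tile enters a
given escort, a moving tile is determined by the escort its chain reaches and by its position
on that line, so at most `k * max m₁ m₂` tiles move, each by one cell, in a time step. By the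
triangle inequality the total Manhattan distance `S` is then at most `T * k * max m₁ m₂`.
-/

/-- A cell of an `m₁ × m₂` grid. -/
abbrev Cell (m₁ m₂ : ℕ) := Fin m₁ × Fin m₂

/-- Manhattan (L1) distance between two cells. -/
def manhattan {m₁ m₂ : ℕ} (p q : Cell m₁ m₂) : ℕ :=
  ((p.1.val : ℤ) - (q.1.val : ℤ)).natAbs + ((p.2.val : ℤ) - (q.2.val : ℤ)).natAbs

/-- The movement direction vector of tile `i` between configurations `c` and `c'`. -/
def dirOf {m₁ m₂ n : ℕ} (c c' : Fin n → Cell m₁ m₂) (i : Fin n) : ℤ × ℤ :=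
  (((c' i).1.val : ℤ) - ((c i).1.val : ℤ), ((c' i).2.val : ℤ) - ((c i).2.val : ℤ))

/-- One synchronous time step of the generalized sliding-tile puzzle: every tile stays or
moves to an adjacent cell, no meet collisions, no head-on collisions, and the
corner-following constraint holds. -/
structure GstpStep (m₁ m₂ n : ℕ) (c c' : Fin n → Cell m₁ m₂) : Prop where
  start_inj : Function.Injective c
  end_inj : Function.Injective c'
  move : ∀ i, manhattan (c i) (c' i) ≤ 1
  no_swap : ∀ i j, i ≠ j → ¬(c' i = c j ∧ c' j = c i)
  cfc : ∀ i j, i ≠ j → c' i = c j → c' i ≠ c i →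
    (dirOf c c' i).1 * (dirOf c c' j).1 + (dirOf c c' i).2 * (dirOf c c' j).2 ≠ 0

/-- The GSTP instance with start `s` and goal `g` is solvable within `T` time steps. -/
def SolvableIn (m₁ m₂ n T : ℕ) (s g : Fin n → Cell m₁ m₂) : Prop :=
  ∃ T' ≤ T, ∃ c : ℕ → Fin n → Cell m₁ m₂, c 0 = s ∧ c T' = g ∧
    ∀ t < T', GstpStep m₁ m₂ n (c t) (c (t + 1))

open Finset

section Grid

variable {m₁ m₂ : ℕ}

lemma manhattan_eq_zero_iff {p q : Cell m₁ m₂} : manhattan p q = 0 ↔ p = q := by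
  refine ⟨fun hpq => ?_, fun hpq => by simp [hpq, manhattan]⟩
  unfold manhattan at hpq
  exact Prod.ext (Fin.ext (by omega)) (Fin.ext (by omega))

lemma manhattan_triangle (p q r : Cell m₁ m₂) :
    manhattan p r ≤ manhattan p q + manhattan q r := by
  simp only [manhattan]
  have h₁ := Int.natAbs_add_le ((p.1 : ℤ) - q.1) ((q.1 : ℤ) - r.1)
  have h₂ := Int.natAbs_add_le ((p.2 : ℤ) - q.2) ((q.2 : ℤ) - r.2)
  omega

lemma manhattan_le_sum_range (f : ℕ → Cell m₁ m₂) (T : ℕ) :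
    manhattan (f 0) (f T) ≤ ∑ t ∈ range T, manhattan (f t) (f (t + 1)) := by
  induction T with
  | zero => simp [manhattan_eq_zero_iff]
  | succ T ih =>
    rw [sum_range_succ]
    exact (manhattan_triangle _ (f T) _).trans (Nat.add_le_add_right ih _)

/-- For an axis direction `d`: the index of the line through `p` parallel to `d`, and
(`posOnLine`) the position of `p` on that line. -/
def lineOf (d : ℤ × ℤ) (p : Cell m₁ m₂) : ℕ := if d.1 = 0 then p.1 else p.2

def posOnLine (d : ℤ × ℤ) (p : Cell m₁ m₂) : ℕ := if d.1 = 0 then p.2 else p.1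

lemma posOnLine_lt_max (d : ℤ × ℤ) (p : Cell m₁ m₂) : posOnLine d p < max m₁ m₂ := by
  unfold posOnLine
  split_ifs <;> omega

lemma eq_of_lineOf_eq_of_posOnLine_eq {d : ℤ × ℤ} {p q : Cell m₁ m₂}
    (hl : lineOf d p = lineOf d q) (hpos : posOnLine d p = posOnLine d q) : p = q := by
  unfold lineOf posOnLine at *
  split_ifs at hl hpos <;> exact Prod.ext (Fin.ext ‹_›) (Fin.ext ‹_›)

end Grid

def IsAxisUnit (d : ℤ × ℤ) : Prop := d.1.natAbs + d.2.natAbs = 1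

namespace IsAxisUnit

variable {u v : ℤ × ℤ}

lemma cases (hu : IsAxisUnit u) : u = (1, 0) ∨ u = (-1, 0) ∨ u = (0, 1) ∨ u = (0, -1) := by
  obtain ⟨a, b⟩ := u
  simp only [IsAxisUnit] at hu
  simp only [Prod.mk.injEq]
  omega

lemma eq_or_eq_neg_of_dot_ne_zero (hu : IsAxisUnit u) (hv : IsAxisUnit v)
    (huv : u.1 * v.1 + u.2 * v.2 ≠ 0) : v = u ∨ v = -u := by
  rcases hu.cases with rfl | rfl | rfl | rfl <;> rcases hv.cases with rfl | rfl | rfl | rfl <;>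
    simp_all

end IsAxisUnit

namespace GstpStep

variable {m₁ m₂ n : ℕ} {c c' : Fin n → Cell m₁ m₂} (h : GstpStep m₁ m₂ n c c')
include h

lemma isAxisUnit_dirOf {i : Fin n} (hi : c' i ≠ c i) : IsAxisUnit (dirOf c c' i) := by
  have := h.move i
  have := mt manhattan_eq_zero_iff.1 (Ne.symm hi)
  unfold manhattan at *
  unfold IsAxisUnit dirOf
  omega

lemma lineOf_apply_eq {i : Fin n} (hi : c' i ≠ c i) :
    lineOf (dirOf c c' i) (c' i) = lineOf (dirOf c c' i) (c i) := by
  have hu := h.isAxisUnit_dirOf hi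
  unfold lineOf IsAxisUnit dirOf at *
  split_ifs <;> omega

lemma moves_and_dirOf_eq_of_push {i j : Fin n} (hi : c' i ≠ c i) (hij : c' i = c j) :
    c' j ≠ c j ∧ dirOf c c' j = dirOf c c' i := by
  have hne : i ≠ j := by
    rintro rfl
    exact hi hij
  have hj : c' j ≠ c j := fun hj => hne (h.end_inj (hij.trans hj.symm))
  refine ⟨hj, ?_⟩
  rcases (h.isAxisUnit_dirOf hi).eq_or_eq_neg_of_dot_ne_zero (h.isAxisUnit_dirOf hj)
    (h.cfc i j hne hij hi) with hd | hd
  · exact hd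
  · refine absurd ⟨hij, ?_⟩ (h.no_swap i j hne)
    simp only [dirOf, Prod.ext_iff, Prod.fst_neg, Prod.snd_neg] at hd
    simp only [Prod.ext_iff, Fin.ext_iff] at hij ⊢
    omega

theorem exists_push_chain_to_escort {i : Fin n} (hi : c' i ≠ c i) :
    ∃ j, c' j ∉ Set.range c ∧ dirOf c c' j = dirOf c c' i ∧
      lineOf (dirOf c c' i) (c j) = lineOf (dirOf c c' i) (c i) := by
  by_cases hocc : c' i ∈ Set.range c
  · obtain ⟨j, hj⟩ := hocc
    obtain ⟨hj_moves, hdir⟩ := h.moves_and_dirOf_eq_of_push hi hj.symm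
    obtain ⟨l, hl, hdl, hline⟩ := exists_push_chain_to_escort hj_moves
    refine ⟨l, hl, hdl.trans hdir, ?_⟩
    rw [← hdir, hline, hdir, hj, h.lineOf_apply_eq hi]
  · exact ⟨i, hocc, rfl, rfl⟩
-- `⟨c i, dirOf c c' i⟩` grows by one along the chain and stays below `m₁ + m₂`.
termination_by (m₁ + m₂ - ((c i).1 * (dirOf c c' i).1 + (c i).2 * (dirOf c c' i).2 : ℤ)).toNat
decreasing_by
  rw [hdir, hj]
  rcases (h.isAxisUnit_dirOf hi).cases with hd | hd | hd | hd <;> rw [hd] <;>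
    simp only [dirOf, Prod.ext_iff] at hd <;> omega

lemma card_moving_le : #{i | c' i ≠ c i} ≤ (m₁ * m₂ - n) * max m₁ m₂ := by
  classical
  choose! chainEnd hend_esc hend_dir hend_line using
    fun i (hi : c' i ≠ c i) => h.exists_push_chain_to_escort hi
  set J : Finset (Fin n) := {l | c' l ∉ Set.range c}
  have hJ : #J ≤ m₁ * m₂ - n := calc
    #J ≤ #(univ.image c)ᶜ :=
      card_le_card_of_injOn c' (fun l hl => by simpa [J] using hl) h.end_inj.injOn
    _ = m₁ * m₂ - n := by rw [card_compl, card_image_of_injective _ h.start_inj]; simp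
  calc #{i | c' i ≠ c i}
      ≤ #(J ×ˢ range (max m₁ m₂)) := by
        refine card_le_card_of_injOn (fun i => (chainEnd i, posOnLine (dirOf c c' i) (c i)))
          (fun i hi => ?_) (fun i hi i' hi' heq => ?_)
        · simp only [mem_coe, mem_filter, mem_univ, true_and] at hi
          exact mem_product.2
            ⟨by simpa [J] using hend_esc i hi, mem_range.2 (posOnLine_lt_max _ _)⟩
        · simp only [mem_coe, mem_filter, mem_univ, true_and] at hi hi'
          obtain ⟨hend, hpos⟩ := Prod.ext_iff.1 heq
          dsimp only at hend hpos
          have hdir : dirOf c c' i = dirOf c c' i' := by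
            rw [← hend_dir i hi, ← hend_dir i' hi', hend]
          refine h.start_inj (eq_of_lineOf_eq_of_posOnLine_eq ?_ (hpos.trans (by rw [hdir])))
          rw [← hend_line i hi, hend, hdir, hend_line i' hi']
    _ = #J * max m₁ m₂ := by rw [card_product, card_range]
    _ ≤ (m₁ * m₂ - n) * max m₁ m₂ := Nat.mul_le_mul_right _ hJ

lemma sum_manhattan_le : ∑ i, manhattan (c i) (c' i) ≤ (m₁ * m₂ - n) * max m₁ m₂ := calc
  ∑ i, manhattan (c i) (c' i) ≤ ∑ i, if c' i ≠ c i then 1 else 0 := sum_le_sum fun i _ => by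
      split_ifs with hi
      · exact h.move i
      · exact (manhattan_eq_zero_iff.2 (not_not.1 hi).symm).le
  _ = #{i | c' i ≠ c i} := (card_filter _ _).symm
  _ ≤ (m₁ * m₂ - n) * max m₁ m₂ := h.card_moving_le

end GstpStep

theorem gstp_makespan_lower_bound_general
    (m₁ m₂ n k T : ℕ)
    (hesc : n + k = m₁ * m₂)
    (s g : Fin n → Cell m₁ m₂) (c : ℕ → Fin n → Cell m₁ m₂)
    (h0 : c 0 = s) (hT : c T = g)
    (hstep : ∀ t < T, GstpStep m₁ m₂ n (c t) (c (t + 1))) :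
    (∑ i, (manhattan (s i) (g i) : ℚ)) / ((k : ℚ) * (max m₁ m₂ : ℕ)) ≤ T := by
  have hk : m₁ * m₂ - n = k := by omega
  subst h0 hT
  have hS : ∑ i, manhattan (c 0 i) (c T i) ≤ T * (k * max m₁ m₂) := calc
    ∑ i, manhattan (c 0 i) (c T i)
        ≤ ∑ i, ∑ t ∈ range T, manhattan (c t i) (c (t + 1) i) :=
          sum_le_sum fun i _ => manhattan_le_sum_range (c · i) T
    _ = ∑ t ∈ range T, ∑ i, manhattan (c t i) (c (t + 1) i) := sum_comm
    _ ≤ ∑ t ∈ range T, k * max m₁ m₂ :=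
          sum_le_sum fun t ht => hk ▸ (hstep t (mem_range.1 ht)).sum_manhattan_le
    _ = T * (k * max m₁ m₂) := by rw [sum_const, card_range, smul_eq_mul]
  exact div_le_of_le_mul₀ (by positivity) (by positivity) (by exact_mod_cast hS)

/-- If `T` GSTP time steps transform the start configuration into the goal
configuration on an `m₁ × m₂` grid with `k` escorts, then `T ≥ S / (k * max m₁ m₂)`,
where `S` is the total Manhattan distance between start and goal positions. -/
theorem gstp_makespan_lower_bound
    (m₁ m₂ n k T : ℕ) (hm₁ : 1 ≤ m₁) (hm₂ : 1 ≤ m₂) (hk : 1 ≤ k)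
    (hesc : n + k = m₁ * m₂)
    (s g : Fin n → Cell m₁ m₂) (c : ℕ → Fin n → Cell m₁ m₂)
    (h0 : c 0 = s) (hT : c T = g)
    (hstep : ∀ t < T, GstpStep m₁ m₂ n (c t) (c (t + 1))) :
    (∑ i, (manhattan (s i) (g i) : ℚ)) / ((k : ℚ) * (max m₁ m₂ : ℕ)) ≤ T :=
  gstp_makespan_lower_bound_general m₁ m₂ n k T hesc s g c h0 hT hstep
end

section
/- Rubik Table theorem for 2D grids: any bijective assignment of the m1·m2 labels to the cells of an m1 × m2 grid can be transformed into the row-major configuration by a sequence consisting of m1 row shuffles (one per row), followed by m2 column shuffles (one per column), followed by m1 row shuffles, where a row (resp. column) shuffle applies an arbitrary permutation to the entries of a single row (resp. column). -/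
/-- `f'` is obtained from `f` by a row shuffle of row `r`: the contents of row `r` are
permuted arbitrarily within row `r`, and all other tiles are untouched. -/
def RowShuffle (m₁ m₂ : ℕ) (f f' : Fin (m₁ * m₂) → Cell m₁ m₂) (r : Fin m₁) : Prop :=
  Function.Bijective f' ∧
    ∀ l, ((f l).1 ≠ r → f' l = f l) ∧ ((f l).1 = r → (f' l).1 = r)

/-- `f'` is obtained from `f` by a column shuffle of column `q`. -/
def ColShuffle (m₁ m₂ : ℕ) (f f' : Fin (m₁ * m₂) → Cell m₁ m₂) (q : Fin m₂) : Prop :=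
  Function.Bijective f' ∧
    ∀ l, ((f l).2 ≠ q → f' l = f l) ∧ ((f l).2 = q → (f' l).2 = q)

/-- A phase of `m₁` row shuffles, one for each row, in order. -/
def RowPhase (m₁ m₂ : ℕ) (f f' : Fin (m₁ * m₂) → Cell m₁ m₂) : Prop :=
  ∃ g : ℕ → Fin (m₁ * m₂) → Cell m₁ m₂, g 0 = f ∧ g m₁ = f' ∧
    ∀ r : Fin m₁, RowShuffle m₁ m₂ (g r.val) (g (r.val + 1)) r

/-- A phase of `m₂` column shuffles, one for each column, in order. -/
def ColPhase (m₁ m₂ : ℕ) (f f' : Fin (m₁ * m₂) → Cell m₁ m₂) : Prop :=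
  ∃ g : ℕ → Fin (m₁ * m₂) → Cell m₁ m₂, g 0 = f ∧ g m₂ = f' ∧
    ∀ q : Fin m₂, ColShuffle m₁ m₂ (g q.val) (g (q.val + 1)) q

/-- The row-major configuration: label `i * m₂ + j` occupies cell `(i, j)`. -/
def rowMajor (m₁ m₂ : ℕ) : Fin (m₁ * m₂) → Cell m₁ m₂ :=
  fun l => (@finProdFinEquiv m₁ m₂).symm l

/-!
Let `N r d` count the tiles in row `r` whose target row is `d`. Every row and every column
of `N` sums to `m₂`, so by Hall's theorem `N` is a sum of `m₂` permutation matrices `τ j`.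
In the first phase row `r` puts into column `j` a tile bound for row `τ j r`; then each
column holds exactly one tile for each target row, the column phase sends every tile to its
target row, and the last phase sorts the rows. A phase only has to realise one row- (or
column-) preserving bijection: shuffling the rows one at a time, from `f` to `f'`, does it.
-/

open Finset Function

section PermDecomposition

variable {α : Type*} [Fintype α] [DecidableEq α]

theorem exists_perm_forall_ne_zero_of_sum_eq {k : ℕ} (hk : k ≠ 0) (N : α → α → ℕ)
    (hrow : ∀ r, ∑ d, N r d = k) (hcol : ∀ d, ∑ r, N r d = k) :
    ∃ π : Equiv.Perm α, ∀ r, N r (π r) ≠ 0 := by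
  let support : α → Finset α := fun r => {d | N r d ≠ 0}
  have hall : ∀ S : Finset α, #S ≤ #(S.biUnion support) := by
    intro S
    refine le_of_mul_le_mul_left ?_ (Nat.pos_of_ne_zero hk)
    calc k * #S = ∑ r ∈ S, ∑ d, N r d := by simp [hrow, mul_comm]
      _ = ∑ r ∈ S, ∑ d ∈ S.biUnion support, N r d := by
          refine sum_congr rfl fun r hr => (sum_subset (subset_univ _) fun d _ hd => ?_).symm
          by_contra hne
          exact hd (mem_biUnion.mpr ⟨r, hr, by simpa [support] using hne⟩)
      _ ≤ ∑ r, ∑ d ∈ S.biUnion support, N r d := sum_le_sum_of_subset (subset_univ S)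
      _ = k * #(S.biUnion support) := by rw [sum_comm]; simp [hcol, mul_comm]
  obtain ⟨π, hπ, hmem⟩ := (all_card_le_biUnion_card_iff_exists_injective support).mp hall
  exact ⟨Equiv.ofBijective π hπ.bijective_of_finite, fun r => by simpa [support] using hmem r⟩

/-- König: a `k`-regular bipartite multigraph is the union of `k` perfect matchings. Hall's
theorem gives one matching in the support; remove it and recurse. -/
theorem exists_perms_card_eq_of_sum_eq (k : ℕ) (N : α → α → ℕ)
    (hrow : ∀ r, ∑ d, N r d = k) (hcol : ∀ d, ∑ r, N r d = k) :
    ∃ σ : Fin k → Equiv.Perm α, ∀ r d, N r d = #{i | σ i r = d} := by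
  induction k generalizing N with
  | zero =>
    exact ⟨finZeroElim, fun r d => by simpa using (sum_eq_zero_iff.mp (hrow r)) d (mem_univ d)⟩
  | succ k ih =>
    obtain ⟨π, hπ⟩ := exists_perm_forall_ne_zero_of_sum_eq k.succ_ne_zero N hrow hcol
    let P : α → α → ℕ := fun r d => if π r = d then 1 else 0
    have hle : ∀ r d, P r d ≤ N r d := by
      intro r d
      by_cases h : π r = d
      · simpa [P, h, Nat.one_le_iff_ne_zero] using hπ r
      · simp [P, h]
    obtain ⟨σ, hσ⟩ := ih (fun r d => N r d - P r d)
      (fun r => by rw [sum_tsub_distrib _ fun d _ => hle r d, hrow]; simp [P])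
      (fun d => by
        rw [sum_tsub_distrib _ fun r _ => hle r d, hcol]
        simp [P, ← Equiv.eq_symm_apply])
    refine ⟨Fin.cons π σ, fun r d => ?_⟩
    rw [card_filter, Fin.sum_univ_succ, ← card_filter]
    simp only [Fin.cons_zero, Fin.cons_succ, ← hσ r d]
    exact (Nat.add_sub_cancel' (hle r d)).symm

end PermDecomposition

theorem exists_equiv_comp_eq_of_card_fiber_eq {α β γ : Type*} [Fintype α] [Fintype β]
    [DecidableEq γ] {A : α → γ} {B : β → γ} (h : ∀ c, #{a | A a = c} = #{b | B b = c}) :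
    ∃ e : α ≃ β, ∀ a, B (e a) = A a :=
  ⟨Equiv.ofFiberEquiv fun c => Fintype.equivOfCardEq (by simpa [Fintype.card_subtype] using h c),
    Equiv.ofFiberEquiv_map _⟩

theorem exists_row_perms_injective_col_color {ι R C : Type*} [Fintype ι] [Fintype R]
    [DecidableEq R] [Fintype C] (e : ι ≃ R × C) (c : ι → R)
    (hc : ∀ d, #{l | c l = d} = Fintype.card C) :
    ∃ ρ : R → Equiv.Perm C, Injective fun l => (ρ (e l).1 (e l).2, c l) := by
  let N : R → R → ℕ := fun r d => #{j | c (e.symm (r, j)) = d}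
  have hrow : ∀ r, ∑ d, N r d = Fintype.card C := fun r =>
    (card_eq_sum_card_fiberwise fun _ _ => mem_univ _).symm
  have hcol : ∀ d, ∑ r, N r d = Fintype.card C := by
    intro d
    rw [← hc d, card_filter, ← e.symm.sum_comp, Fintype.sum_prod_type]
    simp only [N, card_filter]
  obtain ⟨τ, hτ⟩ := exists_perms_card_eq_of_sum_eq _ N hrow hcol
  choose σ hσ using fun r => exists_equiv_comp_eq_of_card_fiber_eq (hτ r)
  have hcolor : ∀ l, τ (σ (e l).1 (e l).2) (e l).1 = c l := fun l => by
    simpa using hσ (e l).1 (e l).2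
  refine ⟨fun r => (σ r).trans (Fintype.equivFin C).symm, fun l l' hll => ?_⟩
  obtain ⟨hcolumn, hsame_color⟩ := Prod.ext_iff.mp hll
  have hσll : σ (e l).1 (e l).2 = σ (e l').1 (e l').2 := by simpa using hcolumn
  have hsame_row : (e l).1 = (e l').1 :=
    (τ _).injective <| by rw [hcolor, hσll, hcolor]; exact hsame_color
  rw [hsame_row] at hσll
  exact e.injective (Prod.ext hsame_row ((σ _).injective hσll))

section ShuffleChain

variable {ι β : Type*} {n : ℕ} (π : β → Fin n) (f f' : ι → β)

/-- The configuration once the blocks `0, …, k - 1` have been shuffled from `f` to `f'`. -/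
def switchBelow (k : ℕ) : ι → β := fun l => if π (f l) < k then f' l else f l

variable {π f f'}

theorem switchBelow_zero : switchBelow π f f' 0 = f := by
  funext l; simp [switchBelow]

theorem switchBelow_of_le {k : ℕ} (hk : n ≤ k) : switchBelow π f f' k = f' := by
  funext l; simp [switchBelow, (π (f l)).isLt.trans_le hk]

theorem switchBelow_succ_of_ne {k : ℕ} {l : ι} (hl : (π (f l) : ℕ) ≠ k) :
    switchBelow π f f' (k + 1) l = switchBelow π f f' k l := by
  simp only [switchBelow, Nat.lt_add_one_iff_lt_or_eq, hl, or_false]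

theorem comp_switchBelow (h : ∀ l, π (f' l) = π (f l)) (k : ℕ) (l : ι) :
    π (switchBelow π f f' k l) = π (f l) := by
  simp only [switchBelow]
  split_ifs <;> simp [h]

theorem bijective_switchBelow (hf : Bijective f) (hf' : Bijective f')
    (h : ∀ l, π (f' l) = π (f l)) (k : ℕ) : Bijective (switchBelow π f f' k) := by
  constructor
  · intro l l' hll
    have hπ : π (f l) = π (f l') := by
      rw [← comp_switchBelow h k l, hll, comp_switchBelow h k l']
    simp only [switchBelow, hπ] at hll
    split_ifs at hll
    exacts [hf'.injective hll, hf.injective hll]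
  · intro b
    by_cases hb : π b < k
    · obtain ⟨l, rfl⟩ := hf'.surjective b
      exact ⟨l, by simp [switchBelow, ← h l, hb]⟩
    · obtain ⟨l, rfl⟩ := hf.surjective b
      exact ⟨l, by simp [switchBelow, hb]⟩

theorem exists_shuffle_chain (hf : Bijective f) (hf' : Bijective f')
    (h : ∀ l, π (f' l) = π (f l)) :
    ∃ g : ℕ → ι → β, g 0 = f ∧ g n = f' ∧ ∀ r : Fin n, Bijective (g (r + 1)) ∧
      ∀ l, (π (g r l) ≠ r → g (r + 1) l = g r l) ∧ (π (g r l) = r → π (g (r + 1) l) = r) := by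
  refine ⟨switchBelow π f f', switchBelow_zero, switchBelow_of_le le_rfl,
    fun r => ⟨bijective_switchBelow hf hf' h _, fun l => ⟨fun hne => ?_, fun heq => ?_⟩⟩⟩
  · rw [comp_switchBelow h] at hne
    exact switchBelow_succ_of_ne (Fin.val_ne_of_ne hne)
  · rwa [comp_switchBelow h] at heq ⊢

end ShuffleChain

section Grid

variable {m₁ m₂ : ℕ} {f f' : Fin (m₁ * m₂) → Cell m₁ m₂}

theorem rowPhase_of_fst_eq (hf : Bijective f) (hf' : Bijective f')
    (h : ∀ l, (f' l).1 = (f l).1) :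
    RowPhase m₁ m₂ f f' :=
  exists_shuffle_chain hf hf' h

theorem colPhase_of_snd_eq (hf : Bijective f) (hf' : Bijective f')
    (h : ∀ l, (f' l).2 = (f l).2) :
    ColPhase m₁ m₂ f f' :=
  exists_shuffle_chain hf hf' h

theorem card_filter_rowMajor_fst_eq (d : Fin m₁) :
    #{l | (rowMajor m₁ m₂ l).1 = d} = Fintype.card (Fin m₂) := by
  rw [card_filter]
  refine (Fintype.sum_equiv finProdFinEquiv.symm _
    (fun c : Cell m₁ m₂ => if c.1 = d then 1 else 0) fun _ => rfl).trans ?_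
  rw [Fintype.sum_prod_type, sum_comm]
  simp

end Grid

/-- Rubik Table theorem for 2D grids: any bijective configuration of
`m₁ * m₂` labels on the grid can be brought to the row-major configuration by `m₁` row
shuffles, then `m₂` column shuffles, then `m₁` row shuffles. -/
theorem rubik_table_2d (m₁ m₂ : ℕ) (f : Fin (m₁ * m₂) → Cell m₁ m₂)
    (hf : Function.Bijective f) :
    ∃ f₁ f₂ : Fin (m₁ * m₂) → Cell m₁ m₂,
      RowPhase m₁ m₂ f f₁ ∧ ColPhase m₁ m₂ f₁ f₂ ∧ RowPhase m₁ m₂ f₂ (rowMajor m₁ m₂) := by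
  obtain ⟨ρ, hρ⟩ := exists_row_perms_injective_col_color (Equiv.ofBijective f hf)
    (fun l => (rowMajor m₁ m₂ l).1) card_filter_rowMajor_fst_eq
  let f₁ := fun l => Equiv.prodShear (Equiv.refl _) ρ (f l)
  let f₂ : Fin (m₁ * m₂) → Cell m₁ m₂ := fun l => ((rowMajor m₁ m₂ l).1, (f₁ l).2)
  have hf₁ : Bijective f₁ := (Equiv.bijective _).comp hf
  have hf₂ : Bijective f₂ := (Prod.swap_injective.comp hρ).bijective_of_nat_card_le (by simp)
  exact ⟨f₁, f₂, rowPhase_of_fst_eq hf hf₁ fun _ => rfl, colPhase_of_snd_eq hf₁ hf₂ fun _ => rfl,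
    rowPhase_of_fst_eq hf₂ finProdFinEquiv.symm.bijective fun _ => rfl⟩
end

section
/- For a bipartite multigraph where each of m1 'row' vertices on each side has degree exactly m2, the edge set decomposes into m2 perfect matchings; consequently, in the Rubik table setting, the first phase of row shuffles can place in each column exactly one tile whose goal lies in each row. -/
/-!
A `k`-regular bipartite multigraph with `k > 0` satisfies Hall's condition: the `k * |A|` edges
leaving a set `A` of left vertices all end in its neighbourhood `N(A)`, which receives only
`k * |N(A)|` edges. So it has a perfect matching, whose removal leaves a `(k - 1)`-regular
multigraph; by induction the edges split into `k` perfect matchings, i.e. a `k`-edge-colouring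
with every colour class a perfect matching.

For the table, join each tile's current row to its goal row, the row of its label in the
row-major order. This multigraph is `m₂`-regular, and sending every tile of colour `j` to
column `j` of its current row is a row shuffle after which each column holds exactly one tile
destined for each row.
-/

open Finset

theorem Finset.card_filter_mem_eq_mul {α β : Type*} [DecidableEq β] {p : α → β} {s : Finset α}
    {k : ℕ} (h : ∀ b, #{a ∈ s | p a = b} = k) (t : Finset β) :
    #{a ∈ s | p a ∈ t} = k * #t := by
  rw [card_eq_sum_card_fiberwise (s := {a ∈ s | p a ∈ t}) (f := p) (t := t)
    fun a ha => (mem_filter.mp ha).2, mul_comm, ← smul_eq_mul, ← sum_const]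
  refine sum_congr rfl fun b hb => ?_
  rw [filter_filter, ← h b]
  congr 1
  exact filter_congr fun a _ => ⟨And.right, fun hab => ⟨hab ▸ hb, hab⟩⟩

theorem Function.Bijective.card_filter_fst_eq {α β γ : Type*} [Fintype α] [Fintype β]
    [Fintype γ] [DecidableEq β] {h : α → β × γ} (hh : Function.Bijective h) (b : β) :
    #{a | (h a).1 = b} = Fintype.card γ := by
  rw [card_equiv (Equiv.ofBijective h hh) (t := {x | x.1 = b}) (by simp),
    ← univ_product_univ, filter_product_left (p := (· = b))]
  simp [filter_eq']

namespace BipartiteMultigraph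

variable {V E : Type*} [DecidableEq V] (ends : E → V × V)

/-- The edges `S` of a bipartite multigraph whose two sides are both indexed by `V`, edge `e`
joining left vertex `(ends e).1` to right vertex `(ends e).2`, have degree `k` at every vertex.
A perfect matching is a `1`-regular set of edges. -/
def IsRegularOfDegree (S : Finset E) (k : ℕ) : Prop :=
  ∀ v, #{e ∈ S | (ends e).1 = v} = k ∧ #{e ∈ S | (ends e).2 = v} = k

variable {ends}

theorem IsRegularOfDegree.sdiff [DecidableEq E] {S M : Finset E} {k : ℕ}
    (hS : IsRegularOfDegree ends S (k + 1)) (hM : IsRegularOfDegree ends M 1) (hMS : M ⊆ S) :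
    IsRegularOfDegree ends (S \ M) k := by
  have filter_sdiff (p : E → Prop) [DecidablePred p] :
      {e ∈ S \ M | p e} = {e ∈ S | p e} \ {e ∈ M | p e} := by
    ext; simp only [mem_filter, mem_sdiff]; tauto
  intro v
  simp only [filter_sdiff]
  rw [card_sdiff_of_subset (filter_subset_filter _ hMS),
    card_sdiff_of_subset (filter_subset_filter _ hMS), (hS v).1, (hS v).2, (hM v).1, (hM v).2]
  omega

theorem IsRegularOfDegree.eq_empty_of_zero {S : Finset E} (hS : IsRegularOfDegree ends S 0) :
    S = ∅ :=
  eq_empty_of_forall_notMem fun e he =>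
    notMem_empty e (card_eq_zero.mp (hS (ends e).1).1 ▸ mem_filter.mpr ⟨he, rfl⟩)

theorem IsRegularOfDegree.card_le_card_neighbors [Fintype V] {S : Finset E} {k : ℕ}
    (hS : IsRegularOfDegree ends S k) (hk : 0 < k) (A : Finset V) :
    #A ≤ #{w | ∃ v ∈ A, ∃ e ∈ S, ends e = (v, w)} := by
  set N : Finset V := {w | ∃ v ∈ A, ∃ e ∈ S, ends e = (v, w)}
  have hAN : {e ∈ S | (ends e).1 ∈ A} ⊆ {e ∈ S | (ends e).2 ∈ N} := by
    intro e he
    obtain ⟨heS, heA⟩ := mem_filter.mp he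
    exact mem_filter.mpr ⟨heS, mem_filter.mpr ⟨mem_univ _, _, heA, e, heS, rfl⟩⟩
  have := card_le_card hAN
  rw [card_filter_mem_eq_mul (fun v => (hS v).1),
    card_filter_mem_eq_mul (fun v => (hS v).2)] at this
  exact Nat.le_of_mul_le_mul_left this hk

theorem isRegularOfDegree_one_image [Fintype V] [DecidableEq E] {σ : V → E} {g : V → V}
    (hg : Function.Bijective g) (hσ : ∀ v, ends (σ v) = (v, g v)) :
    IsRegularOfDegree ends (univ.image σ) 1 := by
  have hσinj : Function.Injective σ := fun a b hab => by
    simpa [hσ] using congrArg (fun e => (ends e).1) hab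
  intro v
  simp only [filter_image, card_image_of_injective _ hσinj, hσ]
  exact ⟨by rw [filter_eq', if_pos (mem_univ v), card_singleton],
    (Fintype.existsUnique_iff_card_one _).mp (hg.existsUnique v)⟩

theorem IsRegularOfDegree.exists_perfectMatching [Fintype V] [DecidableEq E] {S : Finset E}
    {k : ℕ} (hS : IsRegularOfDegree ends S k) (hk : 0 < k) :
    ∃ M ⊆ S, IsRegularOfDegree ends M 1 := by
  obtain ⟨g, hg, hgS⟩ := (Fintype.all_card_le_filter_rel_iff_exists_injective
    (fun v w => ∃ e ∈ S, ends e = (v, w))).mp (hS.card_le_card_neighbors hk)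
  choose σ hσS hσ using hgS
  exact ⟨univ.image σ, by simpa [image_subset_iff] using hσS,
    isRegularOfDegree_one_image (Finite.injective_iff_bijective.mp hg) hσ⟩

theorem IsRegularOfDegree.exists_coloring [Fintype V] [DecidableEq E] {S : Finset E} {k : ℕ}
    (hS : IsRegularOfDegree ends S k) :
    ∃ c : E → ℕ, (∀ e ∈ S, c e < k) ∧ ∀ j < k, IsRegularOfDegree ends {e ∈ S | c e = j} 1 := by
  induction k generalizing S with
  | zero => exact ⟨0, by simp [hS.eq_empty_of_zero], by simp⟩
  | succ k ih =>
    obtain ⟨M, hMS, hM⟩ := hS.exists_perfectMatching k.succ_pos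
    obtain ⟨c, hcS, hc⟩ := ih (hS.sdiff hM hMS)
    have hcS' : ∀ e ∈ S, e ∉ M → c e < k := fun e he heM => hcS e (mem_sdiff.mpr ⟨he, heM⟩)
    refine ⟨fun e => if e ∈ M then k else c e, fun e he => ?_, fun j hj => ?_⟩
    · dsimp only
      split_ifs with heM
      · exact k.lt_succ_self
      · exact (hcS' e he heM).trans k.lt_succ_self
    rcases Nat.lt_succ_iff_lt_or_eq.mp hj with hjk | rfl
    · have hclass : {e ∈ S | (if e ∈ M then k else c e) = j} = {e ∈ S \ M | c e = j} := by
        ext e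
        by_cases heM : e ∈ M <;> simp [heM, hjk.ne']
      rw [hclass]
      exact hc j hjk
    · have hclass : {e ∈ S | (if e ∈ M then j else c e) = j} = M := by
        ext e
        by_cases heM : e ∈ M
        · simp [heM, hMS heM]
        · simpa [heM] using fun he => (hcS' e he heM).ne
      rw [hclass]
      exact hM

theorem IsRegularOfDegree.exists_fin_coloring [Fintype V] [Fintype E] [DecidableEq E] {k : ℕ}
    (h : IsRegularOfDegree ends univ k) :
    ∃ c : E → Fin k, ∀ j v,
      (∃! e, c e = j ∧ (ends e).1 = v) ∧ (∃! e, c e = j ∧ (ends e).2 = v) := by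
  obtain ⟨c, hc, hreg⟩ := h.exists_coloring
  refine ⟨fun e => ⟨c e, hc e (mem_univ e)⟩, fun j v => ?_⟩
  simp only [Fintype.existsUnique_iff_card_one, Fin.ext_iff]
  simpa only [filter_filter] using hreg j j.isLt v

end BipartiteMultigraph

open BipartiteMultigraph in
/-- A bipartite multigraph on `m₁ + m₁` vertices (one edge per tile,
connecting its current row to its goal row) in which every vertex has degree exactly
`m₂` decomposes into `m₂` perfect matchings; consequently, row shuffles alone can reach a
configuration in which each column contains exactly one tile destined for each row. -/
theorem bipartite_decomposition_and_rubik_intermediate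
    (m₁ m₂ : ℕ) (ends : Fin (m₁ * m₂) → Fin m₁ × Fin m₁)
    (hdegL : ∀ v : Fin m₁, (Finset.univ.filter fun e => (ends e).1 = v).card = m₂)
    (hdegR : ∀ v : Fin m₁, (Finset.univ.filter fun e => (ends e).2 = v).card = m₂) :
    (∃ color : Fin (m₁ * m₂) → Fin m₂,
      ∀ (j : Fin m₂) (v : Fin m₁),
        (∃! e, color e = j ∧ (ends e).1 = v) ∧ (∃! e, color e = j ∧ (ends e).2 = v))
    ∧ (∀ f : Fin (m₁ * m₂) → Cell m₁ m₂, Function.Bijective f →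
        ∃ f' : Fin (m₁ * m₂) → Cell m₁ m₂, Function.Bijective f' ∧
          (∀ l, (f' l).1 = (f l).1) ∧
          ∀ (col : Fin m₂) (r : Fin m₁),
            ∃! l, (f' l).2 = col ∧ (rowMajor m₁ m₂ l).1 = r) := by
  refine ⟨IsRegularOfDegree.exists_fin_coloring fun v => ⟨hdegL v, hdegR v⟩, fun f hf => ?_⟩
  have hrowMajor : (rowMajor m₁ m₂).Bijective := finProdFinEquiv.symm.bijective
  have hreg : IsRegularOfDegree (fun l => ((f l).1, (rowMajor m₁ m₂ l).1)) univ m₂ := fun v =>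
    ⟨(hf.card_filter_fst_eq v).trans (Fintype.card_fin m₂),
      (hrowMajor.card_filter_fst_eq v).trans (Fintype.card_fin m₂)⟩
  obtain ⟨c, hc⟩ := hreg.exists_fin_coloring
  refine ⟨fun l => ((f l).1, c l), ?_, fun l => rfl, fun col r => (hc col r).2⟩
  rw [Function.bijective_iff_existsUnique]
  rintro ⟨r, col⟩
  simpa only [Prod.ext_iff, and_comm] using (hc col r).1
end

section
/- For all real m ≥ 4 and the recursion T(m) = 4(6m − 5 − ⌊(m−2)/3⌋) + T(m − ⌊(m−2)/3⌋) with T(4) ≤ 57, one has T(m) ≤ 120m. -/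
/-! Each recursion level removes `k = ⌊(m-2)/3⌋` columns at a cost of `4(6m - 5 - k) ≤ 24m`.
Since `k ≥ (m-4)/3 ≥ m/5` once `m ≥ 10`, that cost is at most `120k`, so charging `120` per removed
column pays for every level and `T m ≤ 120 m` follows by strong induction; the levels with
`m < 10` are evaluated directly from `T 4 ≤ 57`. -/

theorem le_mul_of_amortized_recursion {T cost next : ℕ → ℕ} {C lo n₀ : ℕ}
    (hsmall : ∀ m, lo ≤ m → m < n₀ → T m ≤ C * m)
    (hrec : ∀ m, n₀ ≤ m → T m = cost m + T (next m))
    (hnext : ∀ m, n₀ ≤ m → lo ≤ next m ∧ next m < m)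
    (hcost : ∀ m, n₀ ≤ m → cost m + C * next m ≤ C * m) :
    ∀ m, lo ≤ m → T m ≤ C * m := by
  intro m
  induction m using Nat.strong_induction_on with
  | _ m ih =>
    intro hlo
    rcases Nat.lt_or_ge m n₀ with hm | hm
    · exact hsmall m hlo hm
    · obtain ⟨hlo', hlt⟩ := hnext m hm
      calc T m = cost m + T (next m) := hrec m hm
        _ ≤ cost m + C * next m := Nat.add_le_add_left (ih _ hlt hlo') _
        _ ≤ C * m := hcost m hm

theorem level_cost_add_le {m : ℕ} (hm : 10 ≤ m) :
    4 * (6 * m - 5 - (m - 2) / 3) + 120 * (m - (m - 2) / 3) ≤ 120 * m := by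
  omega

theorem four_le_sub_div_three_and_lt {m : ℕ} (hm : 5 ≤ m) :
    4 ≤ m - (m - 2) / 3 ∧ m - (m - 2) / 3 < m := by
  omega

theorem recursion_le_of_lt_ten {T : ℕ → ℕ} (hbase : T 4 ≤ 57)
    (hrec : ∀ m, 5 ≤ m → T m = 4 * (6 * m - 5 - (m - 2) / 3) + T (m - (m - 2) / 3))
    {m : ℕ} (h4 : 4 ≤ m) (h10 : m < 10) : T m ≤ 120 * m := by
  have h5 : T 5 = 96 + T 4 := hrec 5 (by norm_num)
  have h6 : T 6 = 120 + T 5 := hrec 6 (by norm_num)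
  have h7 : T 7 = 144 + T 6 := hrec 7 (by norm_num)
  have h8 : T 8 = 164 + T 6 := hrec 8 (by norm_num)
  have h9 : T 9 = 188 + T 7 := hrec 9 (by norm_num)
  interval_cases m <;> omega

/-- For the recursion
`T m = 4 * (6m − 5 − ⌊(m−2)/3⌋) + T (m − ⌊(m−2)/3⌋)` (for `m ≥ 5`) with `T 4 ≤ 57`,
one has `T m ≤ 120 * m` for all `m ≥ 4`. -/
theorem recursion_linear_bound (T : ℕ → ℕ)
    (hbase : T 4 ≤ 57)
    (hrec : ∀ m, 5 ≤ m → T m = 4 * (6 * m - 5 - (m - 2) / 3) + T (m - (m - 2) / 3)) :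
    ∀ m, 4 ≤ m → T m ≤ 120 * m :=
  le_mul_of_amortized_recursion (n₀ := 10)
    (fun _ h4 h10 => recursion_le_of_lt_ten hbase hrec h4 h10)
    (fun m hm => hrec m (by omega))
    (fun _ hm => four_le_sub_div_three_and_lt (by omega))
    (fun _ hm => level_cost_add_le hm)
end

section
/- An r-shift (rectangular shift) of an a × b axis-aligned rectangle of cells, in which the escort visits the four corners in clockwise order, cyclically permutes the 2a + 2b − 4 boundary tiles of the rectangle by one position counterclockwise, and can be executed in 2a + 2b − 4 GSTP moves. -/
/-- Manhattan (L1) distance between two cells given by natural coordinates. -/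
def distN (p q : ℕ × ℕ) : ℕ :=
  ((p.1 : ℤ) - (q.1 : ℤ)).natAbs + ((p.2 : ℤ) - (q.2 : ℤ)).natAbs

/-- `p` (given as `(row, column)`) is on the boundary of the `a × b` rectangle. -/
def onBoundary (a b : ℕ) (p : ℕ × ℕ) : Prop :=
  p.1 = 0 ∨ p.1 = a - 1 ∨ p.2 = 0 ∨ p.2 = b - 1

instance (a b : ℕ) (p : ℕ × ℕ) : Decidable (onBoundary a b p) := by
  unfold onBoundary; infer_instance

/-- The counterclockwise successor of a boundary cell of the `a × b` rectangle (rows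
`0,…,a−1` top to bottom, columns `0,…,b−1` left to right): down the left column, right
along the bottom row, up the right column, left along the top row. -/
def nextCCW (a b : ℕ) (p : ℕ × ℕ) : ℕ × ℕ :=
  if p.2 = 0 ∧ p.1 + 1 < a then (p.1 + 1, 0)
  else if p.1 = a - 1 ∧ p.2 + 1 < b then (p.1, p.2 + 1)
  else if p.2 = b - 1 ∧ 0 < p.1 then (p.1 - 1, p.2)
  else (p.1, p.2 - 1)

/-- Where a boundary tile ends up after a clockwise r-shift with the escort starting and
ending at the corner `(0,0)`: one counterclockwise position along the boundary cycle,
skipping over the escort's corner. -/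
def shiftTarget (a b : ℕ) (p : ℕ × ℕ) : ℕ × ℕ :=
  if nextCCW a b p = (0, 0) then nextCCW a b (nextCCW a b p) else nextCCW a b p

/-- One elementary sliding move inside the `a × b` rectangle: a single tile slides into
an adjacent empty cell of the rectangle, all other tiles stay put. -/
def RectMove (a b n : ℕ) (c c' : Fin n → ℕ × ℕ) : Prop :=
  ∃ i, (c' i).1 < a ∧ (c' i).2 < b ∧ distN (c i) (c' i) = 1 ∧
    (∀ j, j ≠ i → c' j = c j) ∧ ∀ j, c j ≠ c' i


/-!
The escort walks once clockwise around the boundary, and each step slides the tile in the cell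
it enters back into the cell it leaves. Along any walk of the escort through adjacent cells of
the rectangle this is a legal move, since the occupied cells are always the rectangle minus the
escort's cell. Numbering the boundary cells clockwise from the escort's corner, the tile with
number `k` is passed once, at step `k - 1`, and moves to `k - 1`; only the tile with number `1`,
which is then parked in the corner, is passed again at the last step and moves to the last
boundary cell. So every tile advances one place counterclockwise, skipping the corner.
-/

open Function

section EscortWalk

variable {α : Type*} [DecidableEq α] {n : ℕ}

def slideInto (p q : α) (c : Fin n → α) : Fin n → α :=
  fun i => if c i = q then p else c i

/-- The escort's move from `e t` to `e (t + 1)` slides the tile there back into `e t`. -/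
def escortWalk (e : ℕ → α) (s : Fin n → α) : ℕ → Fin n → α
  | 0 => s
  | t + 1 => slideInto (e t) (e (t + 1)) (escortWalk e s t)

lemma slideInto_injective {p q : α} {c : Fin n → α} (hc : Injective c) (hp : ∀ j, c j ≠ p) :
    Injective (slideInto p q c) := by
  intro i j h
  simp only [slideInto] at h
  split_ifs at h with hi hj hj
  · exact hc (hi.trans hj.symm)
  · exact absurd h.symm (hp j)
  · exact absurd h (hp i)
  · exact hc h

lemma exists_slideInto_eq_iff {p q x : α} {c : Fin n → α} (hq : ∃ i, c i = q) :
    (∃ i, slideInto p q c i = x) ↔ x = p ∨ (x ≠ q ∧ ∃ i, c i = x) := by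
  obtain ⟨i₀, hi₀⟩ := hq
  simp only [slideInto]
  constructor
  · rintro ⟨i, hi⟩
    split_ifs at hi with h
    · exact Or.inl hi.symm
    · exact Or.inr ⟨hi ▸ h, i, hi⟩
  · rintro (rfl | ⟨hxq, i, rfl⟩)
    · exact ⟨i₀, if_pos hi₀⟩
    · exact ⟨i, if_neg hxq⟩

lemma escortWalk_invariant (R : α → Prop) (e : ℕ → α) (s : Fin n → α) (T : ℕ)
    (hR : ∀ t ≤ T, R (e t)) (hstep : ∀ t < T, e (t + 1) ≠ e t) (hs : Injective s)
    (hrange : ∀ x, (R x ∧ x ≠ e 0) ↔ ∃ i, s i = x) :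
    ∀ t ≤ T, Injective (escortWalk e s t) ∧
      ∀ x, (R x ∧ x ≠ e t) ↔ ∃ i, escortWalk e s t i = x := by
  intro t
  induction t with
  | zero => exact fun _ => ⟨hs, hrange⟩
  | succ t ih =>
    intro ht
    obtain ⟨hinj, hocc⟩ := ih (by omega)
    have hfree : ∀ j, escortWalk e s t j ≠ e t := fun j hj => ((hocc _).2 ⟨j, hj⟩).2 rfl
    have hnext : ∃ i, escortWalk e s t i = e (t + 1) :=
      (hocc _).1 ⟨hR _ ht, hstep t (by omega)⟩
    refine ⟨slideInto_injective hinj hfree, fun x => ?_⟩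
    rw [escortWalk, exists_slideInto_eq_iff hnext, ← hocc]
    have hRt := hR t (by omega)
    have hne := hstep t (by omega)
    by_cases hx : x = e t <;> aesop

lemma escortWalk_apply_of_forall_ne (e : ℕ → α) (s : Fin n → α) (i : Fin n)
    (h : ∀ t, e t ≠ s i) (t : ℕ) : escortWalk e s t i = s i := by
  induction t with
  | zero => rfl
  | succ t ih => simp only [escortWalk, slideInto, ih, if_neg (h (t + 1)).symm]

end EscortWalk

lemma distN_self (p : ℕ × ℕ) : distN p p = 0 := by
  simp [distN]

lemma rectMove_slideInto {a b n : ℕ} {p q : ℕ × ℕ} {c : Fin n → ℕ × ℕ} {i : Fin n}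
    (hc : Injective c) (hp : p.1 < a ∧ p.2 < b) (hqp : distN q p = 1) (hfree : ∀ j, c j ≠ p)
    (hi : c i = q) : RectMove a b n c (slideInto p q c) := by
  have hslide : slideInto p q c i = p := if_pos hi
  refine ⟨i, ?_, ?_, ?_, fun j hj => if_neg fun hjq => hj (hc (hjq.trans hi.symm)), ?_⟩ <;>
    rw [hslide]
  exacts [hp.1, hp.2, hi ▸ hqp, hfree]

lemma escortWalk_rectMove (a b n : ℕ) (e : ℕ → ℕ × ℕ) (s : Fin n → ℕ × ℕ) (T : ℕ)
    (he : ∀ t ≤ T, (e t).1 < a ∧ (e t).2 < b) (hadj : ∀ t < T, distN (e (t + 1)) (e t) = 1)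
    (hs : Injective s) (hrange : ∀ p : ℕ × ℕ, (p.1 < a ∧ p.2 < b ∧ p ≠ e 0) ↔ ∃ i, s i = p) :
    ∀ t < T, RectMove a b n (escortWalk e s t) (escortWalk e s (t + 1)) := by
  have hstep : ∀ t < T, e (t + 1) ≠ e t := fun t ht h => by
    simpa [h, distN_self] using hadj t ht
  have hinv := escortWalk_invariant (fun p => p.1 < a ∧ p.2 < b) e s T he hstep hs
    (fun p => by rw [← hrange, and_assoc])
  intro t ht
  obtain ⟨hinj, hocc⟩ := hinv t ht.le
  obtain ⟨i, hi⟩ := (hocc _).1 ⟨he _ ht, hstep t ht⟩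
  have hfree : ∀ j, escortWalk e s t j ≠ e t := fun j hj => ((hocc _).2 ⟨j, hj⟩).2 rfl
  exact rectMove_slideInto hinj (he t ht.le) (hadj t ht) hfree hi

/-- The boundary index at time `t` of the tile starting at index `k`: the escort passes it at
step `k - 1`, and passes the tile with index `1` once more at the last step `N - 1`. -/
def rshiftIndex (N k t : ℕ) : ℕ :=
  if t < k then k else if k = 1 ∧ t = N then N - 1 else k - 1

lemma rshiftIndex_lt {N k : ℕ} (hkN : k < N) (t : ℕ) : rshiftIndex N k t < N := by
  unfold rshiftIndex
  split_ifs <;> omega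

lemma rshiftIndex_succ {N k t : ℕ} (hk : 1 ≤ k) (ht : t < N) :
    rshiftIndex N k (t + 1) =
      if rshiftIndex N k t = t + 1 ∨ (rshiftIndex N k t = 0 ∧ t + 1 = N) then t
      else rshiftIndex N k t := by
  unfold rshiftIndex
  split_ifs <;> omega

lemma rshiftIndex_perimeter {N k : ℕ} (hkN : k < N) :
    rshiftIndex N k N = if k = 1 then N - 1 else k - 1 := by
  unfold rshiftIndex
  split_ifs <;> omega

lemma injective_of_le_card {α : Type*} [DecidableEq α] {n : ℕ} {s : Fin n → α} {S : Finset α}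
    (hS : n ≤ S.card) (h : ∀ x, x ∈ S ↔ ∃ i, s i = x) : Injective s := by
  have himage : Finset.univ.image s = S := by
    ext x
    simp [h]
  have hcard : (Finset.univ.image s).card = (Finset.univ : Finset (Fin n)).card :=
    le_antisymm Finset.card_image_le (by simpa [himage] using hS)
  simpa using Finset.card_image_iff.mp hcard

section Boundary

variable {a b : ℕ}

/-- The escort's clockwise tour of the boundary of the `a × b` rectangle from `(0, 0)`: right
along the top row, down the right column, left along the bottom row and up the left column,
back at `(0, 0)` at time `2a + 2b - 4`. -/
def boundaryPath (a b t : ℕ) : ℕ × ℕ :=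
  if t < b then (0, t)
  else if t < a + b - 1 then (t - (b - 1), b - 1)
  else if t < a + 2 * b - 2 then (a - 1, a + 2 * b - 3 - t)
  else (2 * a + 2 * b - 4 - t, 0)

def boundaryIndex (a b : ℕ) (p : ℕ × ℕ) : ℕ :=
  if p.1 = 0 then p.2
  else if p.2 = b - 1 then p.1 + b - 1
  else if p.1 = a - 1 then a + 2 * b - 3 - p.2
  else 2 * a + 2 * b - 4 - p.1

lemma boundaryPath_lt (ha : 0 < a) (hb : 0 < b) (t : ℕ) :
    (boundaryPath a b t).1 < a ∧ (boundaryPath a b t).2 < b := by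
  unfold boundaryPath
  split_ifs <;> constructor <;> dsimp only <;> omega

lemma onBoundary_boundaryPath (t : ℕ) : onBoundary a b (boundaryPath a b t) := by
  unfold boundaryPath onBoundary
  split_ifs <;> simp

lemma boundaryPath_zero (hb : 0 < b) : boundaryPath a b 0 = (0, 0) := by
  simp [boundaryPath, hb]

lemma boundaryPath_perimeter (ha : 2 ≤ a) (hb : 2 ≤ b) :
    boundaryPath a b (2 * a + 2 * b - 4) = (0, 0) := by
  unfold boundaryPath
  split_ifs <;> simp only [Prod.mk.injEq, true_and, and_true] <;> omega

lemma distN_boundaryPath_succ (ha : 2 ≤ a) (hb : 2 ≤ b) {t : ℕ} (ht : t < 2 * a + 2 * b - 4) :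
    distN (boundaryPath a b (t + 1)) (boundaryPath a b t) = 1 := by
  unfold boundaryPath distN
  split_ifs <;> simp <;> omega

lemma boundaryIndex_boundaryPath (ha : 2 ≤ a) (hb : 2 ≤ b) {t : ℕ}
    (ht : t < 2 * a + 2 * b - 4) : boundaryIndex a b (boundaryPath a b t) = t := by
  unfold boundaryPath
  split_ifs <;> unfold boundaryIndex <;> split_ifs <;> omega

lemma boundaryPath_boundaryIndex (ha : 2 ≤ a) (hb : 2 ≤ b) {p : ℕ × ℕ}
    (hp : onBoundary a b p) (h1 : p.1 < a) (h2 : p.2 < b) :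
    boundaryPath a b (boundaryIndex a b p) = p ∧ boundaryIndex a b p < 2 * a + 2 * b - 4 := by
  obtain ⟨x, y⟩ := p
  unfold onBoundary at hp
  dsimp only at hp h1 h2
  unfold boundaryIndex
  split_ifs <;> unfold boundaryPath <;> split_ifs <;>
    simp only [Prod.mk.injEq, and_true] <;> omega

lemma boundaryPath_eq_iff (ha : 2 ≤ a) (hb : 2 ≤ b) {i j : ℕ} (hi : i < 2 * a + 2 * b - 4)
    (hj : j ≤ 2 * a + 2 * b - 4) :
    boundaryPath a b i = boundaryPath a b j ↔ i = j ∨ (i = 0 ∧ j = 2 * a + 2 * b - 4) := by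
  constructor
  · intro h
    rcases hj.lt_or_eq with hj | rfl
    · left
      rw [← boundaryIndex_boundaryPath ha hb hi, h, boundaryIndex_boundaryPath ha hb hj]
    · right
      refine ⟨?_, rfl⟩
      rw [← boundaryIndex_boundaryPath ha hb hi, h, boundaryPath_perimeter ha hb]
      simp [boundaryIndex]
  · rintro (rfl | ⟨rfl, rfl⟩)
    · rfl
    · rw [boundaryPath_zero (by omega), boundaryPath_perimeter ha hb]

lemma nextCCW_boundaryPath (ha : 2 ≤ a) (hb : 2 ≤ b) {t : ℕ} (h1 : 1 ≤ t)
    (ht : t ≤ 2 * a + 2 * b - 4) :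
    nextCCW a b (boundaryPath a b t) = boundaryPath a b (t - 1) := by
  unfold boundaryPath
  split_ifs <;> unfold nextCCW <;> dsimp only <;> split_ifs <;>
    simp only [Prod.mk.injEq, true_and, and_true] <;> omega

lemma escortWalk_boundaryPath_apply {n : ℕ} (ha : 2 ≤ a) (hb : 2 ≤ b) {s : Fin n → ℕ × ℕ}
    {i : Fin n} {k : ℕ} (hk1 : 1 ≤ k) (hkN : k < 2 * a + 2 * b - 4)
    (hsi : s i = boundaryPath a b k) {t : ℕ} (ht : t ≤ 2 * a + 2 * b - 4) :
    escortWalk (boundaryPath a b) s t i =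
      boundaryPath a b (rshiftIndex (2 * a + 2 * b - 4) k t) := by
  induction t with
  | zero => simp only [escortWalk, rshiftIndex, hsi, if_pos (show 0 < k by omega)]
  | succ t ih =>
    simp only [escortWalk, slideInto, ih (by omega),
      boundaryPath_eq_iff ha hb (rshiftIndex_lt hkN t) ht]
    rw [rshiftIndex_succ hk1 (show t < 2 * a + 2 * b - 4 by omega)]
    split_ifs <;> rfl

lemma shiftTarget_boundaryPath (ha : 2 ≤ a) (hb : 2 ≤ b) {k : ℕ} (hk1 : 1 ≤ k)
    (hkN : k < 2 * a + 2 * b - 4) :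
    shiftTarget a b (boundaryPath a b k) =
      boundaryPath a b (rshiftIndex (2 * a + 2 * b - 4) k (2 * a + 2 * b - 4)) := by
  unfold shiftTarget
  rw [nextCCW_boundaryPath ha hb hk1 hkN.le, rshiftIndex_perimeter hkN]
  rcases hk1.eq_or_lt with rfl | hk2
  · rw [if_pos rfl, boundaryPath_zero (by omega), if_pos rfl, ← boundaryPath_perimeter ha hb,
      nextCCW_boundaryPath ha hb (by omega) le_rfl]
  · rw [if_neg hk2.ne', if_neg]
    rw [← boundaryPath_zero (a := a) (b := b) (by omega),
      boundaryPath_eq_iff ha hb (by omega) (by omega)]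
    omega

end Boundary

/-- A clockwise r-shift of an `a × b` rectangle whose cells are all filled
with tiles except the escort corner `(0,0)` can be executed in `2a + 2b − 4` GSTP
moves, and it cyclically permutes the `2a + 2b − 5` boundary tiles by one position
counterclockwise (leaving interior tiles, and the escort's corner, unchanged). -/
theorem rshift_executes_cyclic_boundary_shift
    (a b n : ℕ) (ha : 2 ≤ a) (hb : 2 ≤ b) (hn : n + 1 = a * b)
    (s : Fin n → ℕ × ℕ)
    (hrange : ∀ p : ℕ × ℕ, (p.1 < a ∧ p.2 < b ∧ p ≠ (0, 0)) ↔ ∃ i, s i = p) :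
    ∃ c : ℕ → Fin n → ℕ × ℕ, c 0 = s ∧
      (∀ t < 2 * a + 2 * b - 4, RectMove a b n (c t) (c (t + 1))) ∧
      ∀ i, c (2 * a + 2 * b - 4) i =
        if onBoundary a b (s i) then shiftTarget a b (s i) else s i := by
  have hs : Injective s := by
    refine injective_of_le_card (S := (Finset.range a ×ˢ Finset.range b).erase (0, 0)) ?_
      fun p => by simp [← hrange, and_comm, and_assoc]
    rw [Finset.card_erase_of_mem (by simp; omega), Finset.card_product, Finset.card_range,
      Finset.card_range]
    omega
  refine ⟨escortWalk (boundaryPath a b) s, rfl,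
    escortWalk_rectMove a b n _ s _ (fun t _ => boundaryPath_lt (by omega) (by omega) t)
      (fun t ht => distN_boundaryPath_succ ha hb ht) hs (by rwa [boundaryPath_zero (by omega)]),
    fun i => ?_⟩
  obtain ⟨hi1, hi2, hi0⟩ := (hrange (s i)).2 ⟨i, rfl⟩
  split_ifs with hbd
  · obtain ⟨hsi, hkN⟩ := boundaryPath_boundaryIndex ha hb hbd hi1 hi2
    have hk1 : 1 ≤ boundaryIndex a b (s i) := Nat.pos_of_ne_zero fun h0 =>
      hi0 (by rw [← hsi, h0, boundaryPath_zero (by omega)])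
    rw [escortWalk_boundaryPath_apply ha hb hk1 hkN hsi.symm le_rfl,
      ← shiftTarget_boundaryPath ha hb hk1 hkN, hsi]
  · exact escortWalk_apply_of_forall_ne _ s i
      (fun t h => hbd (h ▸ onBoundary_boundaryPath t)) _
end
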